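/- arXiv:0711.3692 — 2 statements merged into one kernel-verified Lean document; each statement's English description precedes it below -/
import Mathlib

section
/- For all integers n ≥ 1 and m ≥ 1, the power sum S_n(m) = 1^n + 2^n + ... + m^n satisfies S_n(m) = m + n · (T P_{n-1})(m), where P_{n-1} ∈ ℚ[X] is the polynomial with P_{n-1}(k) = S_{n-1}(k) for all positive integers k, and T is the ℚ-linear operator on ℚ[X] determined by T(X^j) = (X^{j+1} − X)/(j+1) for all j ≥ 0. -/
/-!
Let `G` be the antiderivative of `P` with `G(0) = 0`, so that `(T P)(x) = G(x) - G(1) x`.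
The values of `P` force the polynomial identity `P(x + 1) - P(x) = (x + 1)^(n - 1)`, hence
`n (G(x + 1) - G(x) - G(1))` and `(x + 1)^n - 1` have the same derivative and both vanish at `0`,
so they are equal. Thus `x + n (T P)(x)` vanishes at `0` and increases by `(x + 1)^n` from `x` to
`x + 1`, and summing these increments gives `S_n(m)`.
-/

open Polynomial Finset

/-- The ℚ-linear operator `T` on `ℚ[X]` determined by
`T(X^j) = (X^(j+1) - X) / (j+1)` for all `j ≥ 0`. -/
noncomputable def powerSumOp (p : Polynomial ℚ) : Polynomial ℚ :=
  p.sum fun j a => Polynomial.C (a / (j + 1)) * (Polynomial.X ^ (j + 1) - Polynomial.X)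

namespace Polynomial

theorem eq_of_derivative_eq_of_eval_zero_eq {R : Type*} [CommRing R] [IsAddTorsionFree R]
    {p q : R[X]} (hd : derivative p = derivative q) (h0 : p.eval 0 = q.eval 0) : p = q := by
  have hconst := eq_C_of_derivative_eq_zero (p := p - q) (by rw [derivative_sub, hd, sub_self])
  rw [coeff_zero_eq_eval_zero, eval_sub, h0, sub_self, C_0] at hconst
  exact sub_eq_zero.mp hconst

theorem eq_of_forall_one_le_eval_natCast_eq {R : Type*} [CommRing R] [IsDomain R] [CharZero R] {p q : R[X]}
    (h : ∀ k : ℕ, 1 ≤ k → p.eval (k : R) = q.eval (k : R)) : p = q := by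
  refine eq_of_infinite_eval_eq p q (Set.infinite_of_injective_forall_mem
    (f := fun k : ℕ => ((k + 1 : ℕ) : R)) (fun a b hab => by simpa using hab) fun k => ?_)
  exact h (k + 1) le_add_self

section Antiderivative

variable {K : Type*} [Field K]

noncomputable def antiderivative (p : K[X]) : K[X] :=
  p.sum fun j a => C (a / (j + 1)) * X ^ (j + 1)

theorem derivative_antiderivative [CharZero K] (p : K[X]) : derivative (antiderivative p) = p := by
  rw [antiderivative, Polynomial.sum_def, map_sum]
  conv_rhs => rw [← sum_C_mul_X_pow_eq p, Polynomial.sum_def]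
  refine Finset.sum_congr rfl fun j _ => ?_
  rw [derivative_C_mul_X_pow, Nat.add_sub_cancel]
  congr 2
  push_cast
  field_simp

theorem eval_zero_antiderivative (p : K[X]) : (antiderivative p).eval 0 = 0 := by
  simp [antiderivative, Polynomial.sum_def, eval_finsetSum]

theorem C_mul_antiderivative_comp_X_add_one_sub [CharZero K] {P : K[X]} {n : ℕ}
    (hP : P.comp (X + 1) - P = (X + 1) ^ (n - 1)) :
    C (n : K) * ((antiderivative P).comp (X + 1) - antiderivative P - C ((antiderivative P).eval 1)) =
      (X + 1) ^ n - 1 := by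
  refine eq_of_derivative_eq_of_eval_zero_eq ?_ ?_
  · simp only [derivative_C_mul, derivative_sub, derivative_comp, derivative_antiderivative,
      derivative_C, derivative_add, derivative_X, derivative_one, derivative_pow, sub_zero,
      add_zero, mul_one, one_mul, hP]
  · simp [eval_zero_antiderivative]

end Antiderivative

theorem comp_X_add_one_sub_eq_of_eval_eq_sum_pow {K : Type*} [Field K] [CharZero K] {P : K[X]}
    {d : ℕ} (hP : ∀ k : ℕ, 1 ≤ k → P.eval (k : K) = ∑ i ∈ Icc 1 k, (i : K) ^ d) :
    P.comp (X + 1) - P = (X + 1) ^ d := by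
  refine eq_of_forall_one_le_eval_natCast_eq fun k hk => ?_
  simp only [eval_sub, eval_comp, eval_add, eval_X, eval_one, eval_pow]
  rw [← Nat.cast_add_one, hP k hk, hP (k + 1) le_add_self, sum_Icc_succ_top (by omega)]
  ring

end Polynomial

theorem eval_powerSumOp (p : ℚ[X]) (x : ℚ) :
    (powerSumOp p).eval x = (antiderivative p).eval x - (antiderivative p).eval 1 * x := by
  simp only [powerSumOp, antiderivative, Polynomial.sum_def, eval_finsetSum, eval_mul, eval_C,
    eval_sub, eval_pow, eval_X, one_pow, mul_one, Finset.sum_mul, ← Finset.sum_sub_distrib]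
  exact Finset.sum_congr rfl fun j _ => by ring

theorem stmt_0_general (n m : ℕ) (P : Polynomial ℚ)
    (hP : ∀ k : ℕ, 1 ≤ k → P.eval (k : ℚ) = ∑ i ∈ Finset.Icc 1 k, (i : ℚ) ^ (n - 1)) :
    ∑ k ∈ Finset.Icc 1 m, (k : ℚ) ^ n = (m : ℚ) + (n : ℚ) * (powerSumOp P).eval (m : ℚ) := by
  have hshift :=
    C_mul_antiderivative_comp_X_add_one_sub (comp_X_add_one_sub_eq_of_eval_eq_sum_pow hP)
  induction m with
  | zero => simp [eval_powerSumOp, eval_zero_antiderivative]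
  | succ m ih =>
    have hstep := congrArg (eval (m : ℚ)) hshift
    simp only [eval_mul, eval_sub, eval_comp, eval_add, eval_X, eval_one, eval_C, eval_pow]
      at hstep
    rw [sum_Icc_succ_top (by omega), ih, eval_powerSumOp, eval_powerSumOp]
    push_cast
    linear_combination -hstep

theorem stmt_0 (n m : ℕ) (hn : 1 ≤ n) (hm : 1 ≤ m) (P : Polynomial ℚ)
    (hP : ∀ k : ℕ, 1 ≤ k → P.eval (k : ℚ) = ∑ i ∈ Finset.Icc 1 k, (i : ℚ) ^ (n - 1)) :
    ∑ k ∈ Finset.Icc 1 m, (k : ℚ) ^ n = (m : ℚ) + (n : ℚ) * (powerSumOp P).eval (m : ℚ) :=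
  stmt_0_general n m P hP
end

section
/- For every integer n ≥ 1, the following identity of polynomials in ℚ[X] holds: T(B_n(X+1)) = (B_{n+1}(X+1) − B_{n+1}(0))/(n+1) − X, where B_k denotes the k-th Bernoulli polynomial and T is the ℚ-linear operator on ℚ[X] with T(X^j) = (X^{j+1} − X)/(j+1). -/
/-!
`T p` is the unique polynomial `Q` with `Q(0) = Q(1) = 0` whose derivative differs from `p` by a
constant: `(X^(j+1) - X)/(j+1)` has derivative `X^j - 1/(j+1)` and vanishes at `0` and `1`.
The right-hand side `R` has these properties for `p = B_n(X+1)`: `R' = B_n(X+1) - 1` because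
`B_{n+1}' = (n+1) B_n`; `R(0) = 0` because `B_{n+1}(1) = B_{n+1}(0)` for `n ≥ 1`; and `R(1) = 0`
because `B_{n+1}(x+1) - B_{n+1}(x) = (n+1) x^n`.
-/

open Polynomial

namespace Polynomial

lemma eq_zero_of_derivative_eq_C {R : Type*} [CommRing R] [IsDomain R] [CharZero R] {D : R[X]}
    {a : R} (hD : derivative D = C a) (h0 : D.eval 0 = 0) (h1 : D.eval 1 = 0) : D = 0 := by
  have hlin : D = C a * X + C (D.coeff 0) := by
    have hconst := eq_C_of_derivative_eq_zero (p := D - C a * X) (by simp [hD])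
    rw [sub_eq_iff_eq_add] at hconst
    simpa [add_comm] using hconst
  rw [hlin] at h0 h1 ⊢
  simp only [eval_add, eval_mul, eval_C, eval_X, mul_zero, zero_add, mul_one] at h0 h1
  simp [h0, show a = 0 by simpa [h0] using h1]

lemma bernoulli_eval_one_eq_eval_zero {n : ℕ} (hn : n ≠ 1) :
    (bernoulli n).eval 1 = (bernoulli n).eval 0 := by
  rw [bernoulli_eval_one, bernoulli_eval_zero, bernoulli_eq_bernoulli'_of_ne_one hn]

lemma derivative_bernoulli_succ_comp_X_add_one (n : ℕ) :
    derivative ((bernoulli (n + 1)).comp (X + 1)) =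
      C ((n : ℚ) + 1) * (bernoulli n).comp (X + 1) := by
  rw [derivative_comp, derivative_bernoulli_add_one]
  simp only [mul_comp, add_comp, natCast_comp, one_comp, derivative_add, derivative_X,
    derivative_one, add_zero, one_mul, C_add, C_1, C_eq_natCast]

end Polynomial

lemma derivative_powerSumOp (p : ℚ[X]) :
    derivative (powerSumOp p) = p - C (p.sum fun j a => a / (j + 1)) := by
  conv_rhs => arg 1; rw [← p.sum_C_mul_X_pow_eq]
  simp only [powerSumOp, Polynomial.sum, map_sum]
  rw [← Finset.sum_sub_distrib]
  refine Finset.sum_congr rfl fun j _ => ?_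
  have hj : (j : ℚ) + 1 ≠ 0 := by positivity
  simp only [derivative_C_mul, derivative_sub, derivative_X_pow, derivative_X, Nat.add_sub_cancel]
  rw [mul_sub, mul_one, ← mul_assoc, ← C_mul]
  push_cast
  rw [div_mul_cancel₀ _ hj]

lemma eval_powerSumOp_zero (p : ℚ[X]) : (powerSumOp p).eval 0 = 0 := by
  simp [powerSumOp, Polynomial.sum, eval_finsetSum]

lemma eval_powerSumOp_one (p : ℚ[X]) : (powerSumOp p).eval 1 = 0 := by
  simp [powerSumOp, Polynomial.sum, eval_finsetSum]

lemma powerSumOp_eq_of_derivative_eq_sub_C {p Q : ℚ[X]} {c : ℚ} (hQ : derivative Q = p - C c)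
    (h0 : Q.eval 0 = 0) (h1 : Q.eval 1 = 0) : powerSumOp p = Q := by
  refine sub_eq_zero.mp
    (eq_zero_of_derivative_eq_C (a := c - p.sum fun j a => a / (j + 1)) ?_ ?_ ?_)
  · rw [derivative_sub, derivative_powerSumOp, hQ, C_sub]
    ring
  · simp [eval_powerSumOp_zero, h0]
  · simp [eval_powerSumOp_one, h1]

theorem stmt_2 (n : ℕ) (hn : 1 ≤ n) :
    powerSumOp ((Polynomial.bernoulli n).comp (Polynomial.X + 1)) =
      Polynomial.C (((n : ℚ) + 1)⁻¹) *
        ((Polynomial.bernoulli (n + 1)).comp (Polynomial.X + 1) -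
          Polynomial.C ((Polynomial.bernoulli (n + 1)).eval 0)) - Polynomial.X := by
  have hn1 : (n : ℚ) + 1 ≠ 0 := by positivity
  have hB1 := bernoulli_eval_one_eq_eval_zero (n := n + 1) (by omega)
  refine powerSumOp_eq_of_derivative_eq_sub_C (c := 1) ?_ ?_ ?_
  · rw [derivative_sub, derivative_C_mul, derivative_sub, derivative_C, sub_zero,
      derivative_bernoulli_succ_comp_X_add_one, ← mul_assoc, ← C_mul, inv_mul_cancel₀ hn1,
      C_1, one_mul, derivative_X]
  · simp [hB1]
  · have hB2 := bernoulli_eval_one_add (n + 1) 1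
    rw [hB1, one_add_one_eq_two, one_pow, mul_one] at hB2
    simp only [eval_sub, eval_mul, eval_C, eval_comp, eval_add, eval_X, eval_one,
      one_add_one_eq_two, hB2, add_sub_cancel_left, Nat.cast_succ, inv_mul_cancel₀ hn1, sub_self]
end
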